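/- Let {X, φ_i} be a limit space for a finitely semicomponible CIS {X_i, Y_i, f_i}. Then {X, φ_i} is a fundamental limit space if and only if the collection {φ_i(X_i)}_{i∈ℕ} is a locally finite cover of X by closed sets (each φ_i(X_i) is closed in X and every point of X has a neighborhood meeting only finitely many of the sets φ_i(X_i)). -/
import Mathlib


universe u v w

/-- A closed injective system (CIS): nonempty topological spaces `X i`, closed subspaces
`Y i ⊆ X i`, and closed injective continuous maps `f i : Y i → X (i+1)`, modeled as total
maps `f i : X i → X (i+1)` whose relevant properties are only required on `Y i`. -/
structure CIS where
  X : ℕ → Type u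
  topX : ∀ i, TopologicalSpace (X i)
  nonemptyX : ∀ i, Nonempty (X i)
  Y : ∀ i, Set (X i)
  closedY : ∀ i, IsClosed (Y i)
  f : ∀ i, X i → X (i + 1)
  f_contOn : ∀ i, ContinuousOn (f i) (Y i)
  f_injOn : ∀ i, Set.InjOn (f i) (Y i)
  f_closedOn : ∀ i (C : Set (X i)), IsClosed C → C ⊆ Y i → IsClosed (f i '' C)

instance (S : CIS) (i : ℕ) : TopologicalSpace (S.X i) := S.topX i

/-- The iterated composition `f_{j-1} ∘ ⋯ ∘ f_i : X i → X j` (total extension of `f_{i,j-1}`). -/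
def CIS.T (S : CIS) {i j : ℕ} (h : i ≤ j) (x : S.X i) : S.X j :=
  Nat.leRecOn h (fun {k} y => S.f k y) x

/-- The set `Y_{i,j}` (domain of `f_{i,j}`): points of `Y i` whose iterated images remain in
the sets `Y k` for all `i ≤ k ≤ j`. -/
def CIS.YY (S : CIS) (i j : ℕ) : Set (S.X i) :=
  {x | ∀ k, ∀ h : i ≤ k, k ≤ j → S.T h x ∈ S.Y k}

/-- `f i` and `f j` are semicomponible (`i ≤ j`): every map is semicomponible with itself,
and for `i < j` semicomponibility means that the domain `Y_{i,j}` is nonempty. -/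
def CIS.Semicomp (S : CIS) (i j : ℕ) : Prop :=
  i = j ∨ (i < j ∧ (S.YY i j).Nonempty)

/-- A limit space `{L, φ}` for a CIS. -/
structure IsLimitSpace (S : CIS) (L : Type v) [TopologicalSpace L]
    (φ : ∀ i, S.X i → L) : Prop where
  covers : ⋃ i, Set.range (φ i) = Set.univ
  embedding : ∀ i, Topology.IsEmbedding (φ i)
  l3 : ∀ i j, ∀ hij : i < j, S.Semicomp i j →
    Set.range (φ i) ∩ Set.range (φ j) = φ j '' (S.T hij.le '' S.YY i (j - 1))
  l3' : ∀ i j, ∀ hij : i < j, S.Semicomp i j → ∀ (xi : S.X i) (xj : S.X j),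
    φ i xi = φ j xj → xi ∈ S.YY i (j - 1) ∧ xj = S.T hij.le xi
  l4 : ∀ i j, i < j → ¬ S.Semicomp i j → Set.range (φ i) ∩ Set.range (φ j) = ∅

/-- A fundamental limit space: a limit space whose topology is the weak topology
induced by the maps `φ i`. -/
structure IsFundamentalLimitSpace (S : CIS) (L : Type v) [TopologicalSpace L]
    (φ : ∀ i, S.X i → L) extends IsLimitSpace S L φ : Prop where
  weakTopology : ∀ A : Set L, IsClosed A ↔ ∀ i, IsClosed (φ i ⁻¹' A)

/-- A cis-morphism between closed injective systems. -/
structure CISMorphism (S S' : CIS) where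
  h : ∀ i, S.X i → S'.X i
  cont : ∀ i, Continuous (h i)
  closedMap : ∀ i, IsClosedMap (h i)
  mapsY : ∀ i, h i '' S.Y i ⊆ S'.Y i
  comm : ∀ i, ∀ y ∈ S.Y i, h (i + 1) (S.f i y) = S'.f i (h i y)

/-- A cis-isomorphism: each `h i` is a homeomorphism carrying `Y i` onto `Y' i`. -/
def CISMorphism.IsIso {S S' : CIS} (m : CISMorphism S S') : Prop :=
  ∀ i, Function.Bijective (m.h i) ∧ m.h i '' S.Y i = S'.Y i

/-- The generating relation identifying each `y ∈ Y i` with `f i y ∈ X (i+1)`. -/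
def CIS.Rel0 (S : CIS) (a b : Σ i, S.X i) : Prop :=
  a.2 ∈ S.Y a.1 ∧ b = ⟨a.1 + 1, S.f a.1 a.2⟩

/-- The relation `~` on the coproduct `⨿ X i` for an inductive CIS:
`⟨i, x⟩ ~ ⟨j, y⟩` iff `y = f_i^j x` when `i ≤ j`, and `x = f_j^i y` when `j < i`. -/
def CIS.IndRel (S : CIS) (a b : Σ i, S.X i) : Prop :=
  (∀ h : a.1 ≤ b.1, S.T h a.2 = b.2) ∧ (∀ h : b.1 < a.1, S.T h.le b.2 = a.2)

/-- A CIS is finitely semicomponible if for each `i` only finitely many `j` are such that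
`f i, f j` (or `f j, f i`) are semicomponible. -/
def CIS.FinitelySemicomp (S : CIS) : Prop :=
  ∀ i, {j | S.Semicomp i j ∨ S.Semicomp j i}.Finite


namespace CIS

lemma T_self' (S : CIS) {i : ℕ} (h : i ≤ i) (x : S.X i) : S.T h x = x :=
  Nat.leRecOn_self x

lemma T_succ' (S : CIS) {i j : ℕ} (h : i ≤ j) (h' : i ≤ j + 1) (x : S.X i) :
    S.T h' x = S.f j (S.T h x) :=
  Nat.leRecOn_succ h x

lemma YY_self (S : CIS) (i : ℕ) : S.YY i i = S.Y i := by
  ext x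
  constructor
  · intro hx
    have := hx i le_rfl le_rfl
    rwa [S.T_self'] at this
  · intro hx k hk hk'
    obtain rfl := le_antisymm hk hk'
    rwa [S.T_self']

lemma YY_succ (S : CIS) {i j : ℕ} (h : i ≤ j) :
    S.YY i (j + 1) = S.YY i j ∩ (S.T (h.trans j.le_succ)) ⁻¹' (S.Y (j + 1)) := by
  ext x
  constructor
  · intro hx
    exact ⟨fun k hk hkj => hx k hk (hkj.trans j.le_succ), hx (j + 1) (h.trans j.le_succ) le_rfl⟩
  · rintro ⟨hx1, hx2⟩ k hk hkj
    rcases hkj.lt_or_eq with hkj' | rfl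
    · exact hx1 k hk (Nat.lt_succ_iff.mp hkj')
    · exact hx2

lemma key (S : CIS) {i j : ℕ} (h : i ≤ j) :
    IsClosed (S.YY i j) ∧ ContinuousOn (S.T h) (S.YY i j) ∧
      S.T h '' S.YY i j ⊆ S.Y j ∧ IsClosed (S.T h '' S.YY i j) ∧
      Set.InjOn (S.T h) (S.YY i j) := by
  induction j, h using Nat.le_induction with
  | base =>
    have himg : S.T (le_refl i) '' S.YY i i = S.Y i := by
      rw [S.YY_self]
      ext y
      constructor
      · rintro ⟨x, hx, rfl⟩; rwa [S.T_self']
      · intro hy; exact ⟨y, hy, S.T_self' _ y⟩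
    refine ⟨S.YY_self i ▸ S.closedY i, ?_, ?_, ?_, ?_⟩
    · exact continuousOn_id.congr fun x _ => S.T_self' _ x
    · rw [himg]
    · rw [himg]; exact S.closedY i
    · intro a _ b _ hab; rwa [S.T_self', S.T_self'] at hab
  | succ j hij IH =>
    obtain ⟨hcl, hcont, hsub, himgcl, hinj⟩ := IH
    have hmaps : Set.MapsTo (S.T hij) (S.YY i j) (S.Y j) :=
      fun x hx => hsub ⟨x, hx, rfl⟩
    have hYYeq := S.YY_succ hij
    have hsubA : S.YY i (j + 1) ⊆ S.YY i j := by
      rw [hYYeq]; exact Set.inter_subset_left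
    have hcont' : ContinuousOn (S.T (hij.trans j.le_succ)) (S.YY i j) := by
      refine ContinuousOn.congr ?_ fun x _ => S.T_succ' hij _ x
      exact (S.f_contOn j).comp hcont hmaps
    have hclosed' : IsClosed (S.YY i (j + 1)) := by
      rw [hYYeq]
      exact hcont'.preimage_isClosed_of_isClosed hcl (S.closedY _)
    have himg_eq : S.T (hij.trans j.le_succ) '' S.YY i (j + 1)
        = (S.f j '' (S.T hij '' S.YY i j)) ∩ S.Y (j + 1) := by
      ext z
      constructor
      · rintro ⟨x, hx, rfl⟩
        refine ⟨⟨S.T hij x, ⟨x, hsubA hx, rfl⟩, (S.T_succ' hij _ x).symm⟩, ?_⟩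
        exact hx (j + 1) (hij.trans j.le_succ) le_rfl
      · rintro ⟨⟨w, ⟨x, hx, rfl⟩, rfl⟩, hz⟩
        have hx' : x ∈ S.YY i (j + 1) := by
          rw [hYYeq]
          refine ⟨hx, ?_⟩
          rw [Set.mem_preimage, S.T_succ' hij]
          exact hz
        exact ⟨x, hx', S.T_succ' hij _ x⟩
    have himgcl' : IsClosed (S.T (hij.trans j.le_succ) '' S.YY i (j + 1)) := by
      rw [himg_eq]
      exact (S.f_closedOn j _ himgcl hsub).inter (S.closedY _)
    have hsub' : S.T (hij.trans j.le_succ) '' S.YY i (j + 1) ⊆ S.Y (j + 1) := by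
      rw [himg_eq]; exact Set.inter_subset_right
    have hinj' : Set.InjOn (S.T (hij.trans j.le_succ)) (S.YY i (j + 1)) := by
      intro a ha b hb hab
      rw [S.T_succ' hij, S.T_succ' hij] at hab
      exact hinj (hsubA ha) (hsubA hb)
        (S.f_injOn j (hmaps (hsubA ha)) (hmaps (hsubA hb)) hab)
    exact ⟨hclosed', hcont'.mono hsubA, hsub', himgcl', hinj'⟩

lemma key_succ (S : CIS) {i m : ℕ} (h : i ≤ m) (h' : i ≤ m + 1) :
    IsClosed (S.T h' '' S.YY i m) ∧ Set.InjOn (S.T h') (S.YY i m) := by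
  obtain ⟨hcl, hcont, hsub, himgcl, hinj⟩ := S.key h
  have himg : S.T h' '' S.YY i m = S.f m '' (S.T h '' S.YY i m) := by
    ext z
    constructor
    · rintro ⟨x, hx, rfl⟩; exact ⟨S.T h x, ⟨x, hx, rfl⟩, (S.T_succ' h h' x).symm⟩
    · rintro ⟨w, ⟨x, hx, rfl⟩, rfl⟩; exact ⟨x, hx, S.T_succ' h h' x⟩
  refine ⟨by rw [himg]; exact S.f_closedOn m _ himgcl hsub, ?_⟩
  intro a ha b hb hab
  rw [S.T_succ' h, S.T_succ' h] at hab
  exact hinj ha hb (S.f_injOn m (hsub ⟨a, ha, rfl⟩) (hsub ⟨b, hb, rfl⟩) hab)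

end CIS

section Aux

variable {S : CIS} {L : Type v} [TopologicalSpace L] {φ : ∀ i, S.X i → L}

lemma compat (hL : IsLimitSpace S L φ) {i j : ℕ} (hij : i < j) (hsc : S.Semicomp i j)
    {x : S.X i} (hx : x ∈ S.YY i (j - 1)) : φ i x = φ j (S.T hij.le x) := by
  obtain ⟨m, rfl⟩ : ∃ m, j = m + 1 := ⟨j - 1, (Nat.succ_pred_eq_of_pos (Nat.zero_lt_of_lt hij)).symm⟩
  have hm : i ≤ m := Nat.lt_succ_iff.mp hij
  have h1 : φ (m + 1) (S.T hij.le x) ∈ Set.range (φ i) ∩ Set.range (φ (m + 1)) := by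
    rw [hL.l3 i (m + 1) hij hsc]
    exact ⟨S.T hij.le x, ⟨x, hx, rfl⟩, rfl⟩
  obtain ⟨w, hw⟩ := h1.1
  obtain ⟨hwY, hTw⟩ := hL.l3' i (m + 1) hij hsc w (S.T hij.le x) hw
  have hwx : w = x := (S.key_succ hm hij.le).2 hwY hx hTw.symm
  rw [hwx] at hw
  exact hw

lemma preim_range_closed (hL : IsLimitSpace S L φ) (k i : ℕ) :
    IsClosed (φ k ⁻¹' Set.range (φ i)) := by
  rcases lt_trichotomy k i with hki | rfl | hik
  · obtain ⟨m, rfl⟩ : ∃ m, i = m + 1 := ⟨i - 1, (Nat.succ_pred_eq_of_pos (Nat.zero_lt_of_lt hki)).symm⟩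
    have hm : k ≤ m := Nat.lt_succ_iff.mp hki
    by_cases hsc : S.Semicomp k (m + 1)
    · have heq : φ k ⁻¹' Set.range (φ (m + 1)) = S.YY k m := by
        ext xk
        constructor
        · rintro ⟨xi, hxi⟩
          exact (hL.l3' k (m + 1) hki hsc xk xi hxi.symm).1
        · intro hx
          exact ⟨S.T hki.le xk, (compat hL hki hsc hx).symm⟩
      rw [heq]
      exact (S.key hm).1
    · have heq : φ k ⁻¹' Set.range (φ (m + 1)) = ∅ := by
        ext xk
        simp only [Set.mem_preimage, Set.mem_empty_iff_false, iff_false]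
        rintro ⟨xi, hxi⟩
        have hmem : φ k xk ∈ Set.range (φ k) ∩ Set.range (φ (m + 1)) := ⟨⟨xk, rfl⟩, ⟨xi, hxi⟩⟩
        rw [hL.l4 k (m + 1) hki hsc] at hmem
        exact hmem
      rw [heq]
      exact isClosed_empty
  · have heq : φ k ⁻¹' Set.range (φ k) = Set.univ := by
      ext x; simp
    rw [heq]
    exact isClosed_univ
  · obtain ⟨m, rfl⟩ : ∃ m, k = m + 1 := ⟨k - 1, (Nat.succ_pred_eq_of_pos (Nat.zero_lt_of_lt hik)).symm⟩
    have hm : i ≤ m := Nat.lt_succ_iff.mp hik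
    by_cases hsc : S.Semicomp i (m + 1)
    · have heq : φ (m + 1) ⁻¹' Set.range (φ i) = S.T hik.le '' S.YY i m := by
        ext xk
        constructor
        · rintro ⟨xi, hxi⟩
          obtain ⟨h1, h2⟩ := hL.l3' i (m + 1) hik hsc xi xk hxi
          exact ⟨xi, h1, h2.symm⟩
        · rintro ⟨x, hx, rfl⟩
          have hmem : φ (m + 1) (S.T hik.le x) ∈ Set.range (φ i) ∩ Set.range (φ (m + 1)) := by
            rw [hL.l3 i (m + 1) hik hsc]
            exact ⟨S.T hik.le x, ⟨x, hx, rfl⟩, rfl⟩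
          exact hmem.1
      rw [heq]
      exact (S.key_succ hm hik.le).1
    · have heq : φ (m + 1) ⁻¹' Set.range (φ i) = ∅ := by
        ext xk
        simp only [Set.mem_preimage, Set.mem_empty_iff_false, iff_false]
        rintro ⟨xi, hxi⟩
        have hmem : φ i xi ∈ Set.range (φ i) ∩ Set.range (φ (m + 1)) := ⟨⟨xi, rfl⟩, ⟨xk, hxi.symm⟩⟩
        rw [hL.l4 i (m + 1) hik hsc] at hmem
        exact hmem
      rw [heq]
      exact isClosed_empty

lemma semicomp_of_meets (hL : IsLimitSpace S L φ) {i j : ℕ}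
    (hne : (Set.range (φ i) ∩ Set.range (φ j)).Nonempty) :
    S.Semicomp i j ∨ S.Semicomp j i := by
  rcases lt_trichotomy i j with h | rfl | h
  · left
    by_contra hsc
    rw [hL.l4 i j h hsc] at hne
    exact hne.ne_empty rfl
  · exact Or.inl (Or.inl rfl)
  · right
    by_contra hsc
    rw [Set.inter_comm, hL.l4 j i h hsc] at hne
    exact hne.ne_empty rfl

end Aux

theorem stmt19 (S : CIS) (hfs : S.FinitelySemicomp)
    (L : Type v) [TopologicalSpace L] (φ : ∀ i, S.X i → L)
    (hL : IsLimitSpace S L φ) :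
    IsFundamentalLimitSpace S L φ ↔
      ((∀ i, IsClosed (Set.range (φ i))) ∧
        LocallyFinite fun i => Set.range (φ i)) := by
  constructor
  · intro hF
    have hclosed : ∀ i, IsClosed (Set.range (φ i)) := fun i =>
      (hF.weakTopology _).2 fun k => preim_range_closed hL k i
    refine ⟨hclosed, ?_⟩
    intro x
    have hx : x ∈ ⋃ i, Set.range (φ i) := by rw [hL.covers]; trivial
    obtain ⟨_, ⟨i, rfl⟩, hxi⟩ := hx
    set A : Set L := ⋃ j ∈ {j : ℕ | x ∉ Set.range (φ j)}, Set.range (φ j) with hA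
    have hAclosed : IsClosed A := by
      rw [hF.weakTopology]
      intro k
      have hpre : φ k ⁻¹' A =
          ⋃ j ∈ {j : ℕ | (S.Semicomp k j ∨ S.Semicomp j k) ∧ x ∉ Set.range (φ j)},
            φ k ⁻¹' Set.range (φ j) := by
        ext y
        simp only [hA, Set.preimage_iUnion, Set.mem_iUnion, Set.mem_preimage, Set.mem_setOf_eq]
        constructor
        · rintro ⟨j, hj, hy⟩
          exact ⟨j, ⟨semicomp_of_meets hL ⟨φ k y, ⟨y, rfl⟩, hy⟩, hj⟩, hy⟩
        · rintro ⟨j, ⟨_, hj⟩, hy⟩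
          exact ⟨j, hj, hy⟩
      rw [hpre]
      exact Set.Finite.isClosed_biUnion ((hfs k).subset fun j hj => hj.1)
        fun j _ => preim_range_closed hL k j
    refine ⟨Aᶜ, hAclosed.isOpen_compl.mem_nhds ?_, ?_⟩
    · simp only [hA, Set.mem_compl_iff, Set.mem_iUnion, Set.mem_setOf_eq, not_exists]
      rintro j hj hxj
      exact hj hxj
    · refine (hfs i).subset ?_
      intro j hj
      obtain ⟨y, hyj, hyA⟩ := hj
      have hxj : x ∈ Set.range (φ j) := by
        by_contra hxj
        exact hyA (Set.mem_biUnion hxj hyj)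
      exact semicomp_of_meets hL ⟨x, hxi, hxj⟩
  · rintro ⟨hcl, hlf⟩
    refine ⟨hL, ?_⟩
    intro A
    constructor
    · intro hA i
      exact hA.preimage (hL.embedding i).continuous
    · intro hA
      have hAeq : A = ⋃ i, φ i '' (φ i ⁻¹' A) := by
        have himg : ∀ i, φ i '' (φ i ⁻¹' A) = A ∩ Set.range (φ i) := fun i =>
          Set.image_preimage_eq_inter_range
        simp_rw [himg]
        rw [← Set.inter_iUnion, hL.covers, Set.inter_univ]
      rw [hAeq]
      refine LocallyFinite.isClosed_iUnion ?_ ?_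
      · exact hlf.subset fun i => Set.image_subset_range _ _
      · intro i
        have hce : Topology.IsClosedEmbedding (φ i) := ⟨hL.embedding i, hcl i⟩
        exact hce.isClosedMap _ (hA i)
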